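/- (Powers–Størmer inequality) For positive semidefinite real symmetric matrices X, Y, ‖√X − √Y‖_F² ≤ ‖X − Y‖_*, where √ denotes the PSD matrix square root, ‖·‖_F the Frobenius norm, and ‖·‖_* the nuclear (trace) norm. -/

import Mathlib

open Matrix

/-- The positive semidefinite square root of a positive semidefinite matrix
(the Mathlib definition of December 2024, since removed). -/
noncomputable def Matrix.PosSemidef.sqrt {n 𝕜 : Type*} [Fintype n] [RCLike 𝕜] [PartialOrder 𝕜] [DecidableEq n]
    {A : Matrix n n 𝕜} (hA : A.PosSemidef) : Matrix n n 𝕜 :=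
  hA.1.eigenvectorUnitary.1 * diagonal ((↑) ∘ (√·) ∘ hA.1.eigenvalues) *
  (star hA.1.eigenvectorUnitary : Matrix n n 𝕜)

/-- Squared Frobenius norm of a real matrix. -/
noncomputable def frobSq {m n : ℕ} (A : Matrix (Fin m) (Fin n) ℝ) : ℝ :=
  ∑ i, ∑ j, (A i j) ^ 2

/-- Frobenius norm. -/
noncomputable def frobNorm {m n : ℕ} (A : Matrix (Fin m) (Fin n) ℝ) : ℝ :=
  Real.sqrt (frobSq A)

lemma wwT_posSemidef {m n : ℕ} (W : Matrix (Fin m) (Fin n) ℝ) :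
    (W * Wᵀ).PosSemidef := by
  simpa [Matrix.conjTranspose_eq_transpose_of_trivial] using
    W.posSemidef_self_mul_conjTranspose

/-- Nuclear norm: trace of the PSD square root of `W * Wᵀ`. -/
noncomputable def nuclearNorm {m n : ℕ} (W : Matrix (Fin m) (Fin n) ℝ) : ℝ :=
  (wwT_posSemidef W).sqrt.trace

/-!
Write `A = √X`, `B = √Y`, `D = A - B`, so that `X - Y = A D + D B`. For an eigenvector `v` of
`D` with eigenvalue `μ` this gives `vᵀ (X - Y) v = μ · vᵀ (A + B) v`, while `|μ| vᵀv ≤ vᵀ (A + B) v`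
because `A + B ± D` is `2A` or `2B`. Hence `μ² ≤ |vᵀ (X - Y) v| ≤ vᵀ |X - Y| v` for unit `v`, and
summing over an orthonormal eigenbasis of `D` gives `‖D‖_F² ≤ Tr |X - Y| = ‖X - Y‖_*`.
-/

open scoped MatrixOrder

namespace Matrix

variable {ι : Type*} [Fintype ι]

lemma trace_eq_sum_star_dotProduct_mulVec {𝕜 : Type*} [RCLike 𝕜] (M : Matrix ι ι 𝕜)
    (b : OrthonormalBasis ι 𝕜 (EuclideanSpace 𝕜 ι)) :
    M.trace = ∑ i, star ⇑(b i) ⬝ᵥ (M *ᵥ ⇑(b i)) := by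
  classical
  rw [← trace_toLin_eq M (PiLp.basisFun 2 𝕜 ι), ← toLpLin_eq_toLin,
    LinearMap.trace_eq_sum_inner _ b]
  simp [EuclideanSpace.inner_eq_star_dotProduct, toLpLin_apply, dotProduct_comm]

variable {A B : Matrix ι ι ℝ} {v : ι → ℝ} {μ : ℝ}

lemma dotProduct_mulVec_mul_self_sub_mul_self (hAB : (A - B).IsHermitian)
    (hv : (A - B) *ᵥ v = μ • v) :
    v ⬝ᵥ ((A * A - B * B) *ᵥ v) = μ * v ⬝ᵥ ((A + B) *ᵥ v) := by
  have hsplit : A * A - B * B = A * (A - B) + (A - B) * B := by noncomm_ring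
  have hv' : v ᵥ* (A - B) = μ • v := by
    rw [← mulVec_transpose, ← conjTranspose_eq_transpose_of_trivial, hAB.eq, hv]
  rw [hsplit, add_mulVec, ← mulVec_mulVec, ← mulVec_mulVec, dotProduct_add,
    dotProduct_mulVec v _ (B *ᵥ v), hv', hv, mulVec_smul]
  simp only [add_mulVec, dotProduct_add, dotProduct_smul, smul_dotProduct, smul_eq_mul]
  ring

lemma abs_mul_dotProduct_self_le (hA : A.PosSemidef) (hB : B.PosSemidef)
    (hv : (A - B) *ᵥ v = μ • v) :
    |μ| * (v ⬝ᵥ v) ≤ v ⬝ᵥ ((A + B) *ᵥ v) := by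
  have hAv := hA.dotProduct_mulVec_nonneg v
  have hBv := hB.dotProduct_mulVec_nonneg v
  simp only [star_trivial] at hAv hBv
  have hμ : v ⬝ᵥ (A *ᵥ v) - v ⬝ᵥ (B *ᵥ v) = μ * (v ⬝ᵥ v) := by
    rw [← dotProduct_sub, ← sub_mulVec, hv, dotProduct_smul, smul_eq_mul]
  have hvv : 0 ≤ v ⬝ᵥ v := by simpa using dotProduct_self_star_nonneg v
  rw [← abs_of_nonneg hvv, ← abs_mul, add_mulVec, dotProduct_add]
  exact abs_le.2 ⟨by linarith, by linarith⟩

variable [DecidableEq ι]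

lemma PosSemidef.sqrt_eq_cfcSqrt (hA : A.PosSemidef) : hA.sqrt = CFC.sqrt A := by
  have := hA.nonneg
  rw [CFC.sqrt_eq_cfc, cfc_nnreal_eq_real _ A, hA.1.cfc_eq]
  simp only [IsHermitian.cfc, PosSemidef.sqrt, Unitary.conjStarAlgAut_apply]
  congr 3
  funext i
  simp [Real.coe_sqrt, Real.coe_toNNReal', max_eq_left (hA.eigenvalues_nonneg i)]

lemma IsHermitian.abs_dotProduct_mulVec_le {C : Matrix ι ι ℝ} (hC : C.IsHermitian) (v : ι → ℝ) :
    |v ⬝ᵥ (C *ᵥ v)| ≤ v ⬝ᵥ (CFC.abs C *ᵥ v) := by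
  have hC' : IsSelfAdjoint C := hC
  have hsub : 0 ≤ CFC.abs C - C := by
    rw [CFC.abs_sub_self C]; exact smul_nonneg zero_le_two (CFC.negPart_nonneg C)
  have hadd : 0 ≤ CFC.abs C + C := by
    rw [CFC.abs_add_self C]; exact smul_nonneg zero_le_two (CFC.posPart_nonneg C)
  have hsubv := hsub.posSemidef.dotProduct_mulVec_nonneg v
  have haddv := hadd.posSemidef.dotProduct_mulVec_nonneg v
  simp only [star_trivial, sub_mulVec, add_mulVec, dotProduct_sub, dotProduct_add] at hsubv haddv
  exact abs_le.2 ⟨by linarith, by linarith⟩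

lemma sq_mul_dotProduct_self_le_cfcAbs (hA : A.PosSemidef) (hB : B.PosSemidef)
    (hv : (A - B) *ᵥ v = μ • v) :
    μ ^ 2 * (v ⬝ᵥ v) ≤ v ⬝ᵥ (CFC.abs (A * A - B * B) *ᵥ v) := by
  have hμ := abs_mul_dotProduct_self_le hA hB hv
  have hvv : 0 ≤ v ⬝ᵥ v := by simpa using dotProduct_self_star_nonneg v
  have hC : (A * A - B * B).IsHermitian := by
    simpa only [sq] using (hA.1.pow 2).sub (hB.1.pow 2)
  calc μ ^ 2 * (v ⬝ᵥ v) = |μ| * (|μ| * (v ⬝ᵥ v)) := by rw [← mul_assoc, ← sq, sq_abs]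
    _ ≤ |μ| * v ⬝ᵥ ((A + B) *ᵥ v) := by gcongr
    _ = |v ⬝ᵥ ((A * A - B * B) *ᵥ v)| := by
      rw [dotProduct_mulVec_mul_self_sub_mul_self (hA.1.sub hB.1) hv, abs_mul,
        abs_of_nonneg ((mul_nonneg (abs_nonneg μ) hvv).trans hμ)]
    _ ≤ v ⬝ᵥ (CFC.abs (A * A - B * B) *ᵥ v) := hC.abs_dotProduct_mulVec_le v

end Matrix

lemma OrthonormalBasis.star_dotProduct_self {ι 𝕜 : Type*} [Fintype ι] [RCLike 𝕜]
    (b : OrthonormalBasis ι 𝕜 (EuclideanSpace 𝕜 ι)) (i : ι) : star ⇑(b i) ⬝ᵥ ⇑(b i) = 1 := by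
  rw [dotProduct_comm, ← EuclideanSpace.inner_eq_star_dotProduct, b.inner_eq_one]

lemma frobSq_eq_trace_mul_transpose {m n : ℕ} (M : Matrix (Fin m) (Fin n) ℝ) :
    frobSq M = (M * Mᵀ).trace := by
  simp [frobSq, trace, mul_apply, sq]

lemma Matrix.IsHermitian.frobSq_eq_sum_sq_eigenvalues {n : ℕ} {D : Matrix (Fin n) (Fin n) ℝ}
    (hD : D.IsHermitian) : frobSq D = ∑ i, hD.eigenvalues i ^ 2 := by
  rw [frobSq_eq_trace_mul_transpose, ← conjTranspose_eq_transpose_of_trivial, hD.eq,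
    trace_eq_sum_star_dotProduct_mulVec _ hD.eigenvectorBasis]
  refine Finset.sum_congr rfl fun i _ => ?_
  rw [← mulVec_mulVec, hD.mulVec_eigenvectorBasis, mulVec_smul, hD.mulVec_eigenvectorBasis,
    smul_smul, dotProduct_smul, hD.eigenvectorBasis.star_dotProduct_self, smul_eq_mul, mul_one,
    sq]

lemma Matrix.IsHermitian.nuclearNorm_eq_trace_cfcAbs {n : ℕ} {C : Matrix (Fin n) (Fin n) ℝ}
    (hC : C.IsHermitian) : nuclearNorm C = (CFC.abs C).trace := by
  have hCC : C * Cᵀ = star C * C := by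
    rw [star_eq_conjTranspose, hC.eq, ← conjTranspose_eq_transpose_of_trivial, hC.eq]
  rw [nuclearNorm, PosSemidef.sqrt_eq_cfcSqrt, hCC, CFC.abs]

/-- Powers–Størmer: for PSD real symmetric `X, Y`,
`‖√X − √Y‖_F² ≤ ‖X − Y‖_*`. -/
theorem powers_stormer {n : ℕ} (X Y : Matrix (Fin n) (Fin n) ℝ)
    (hX : X.PosSemidef) (hY : Y.PosSemidef) :
    frobSq (hX.sqrt - hY.sqrt) ≤ nuclearNorm (X - Y) := by
  have hX0 := hX.nonneg
  have hY0 := hY.nonneg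
  have hA := (CFC.sqrt_nonneg X).posSemidef
  have hB := (CFC.sqrt_nonneg Y).posSemidef
  have hD : (CFC.sqrt X - CFC.sqrt Y).IsHermitian := hA.1.sub hB.1
  have hXY : X - Y = CFC.sqrt X * CFC.sqrt X - CFC.sqrt Y * CFC.sqrt Y := by
    rw [CFC.sqrt_mul_sqrt_self X, CFC.sqrt_mul_sqrt_self Y]
  rw [hX.sqrt_eq_cfcSqrt, hY.sqrt_eq_cfcSqrt, hD.frobSq_eq_sum_sq_eigenvalues,
    (hX.1.sub hY.1).nuclearNorm_eq_trace_cfcAbs, hXY,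
    trace_eq_sum_star_dotProduct_mulVec _ hD.eigenvectorBasis]
  gcongr with i
  have hunit : ⇑(hD.eigenvectorBasis i) ⬝ᵥ ⇑(hD.eigenvectorBasis i) = 1 := by
    simpa using hD.eigenvectorBasis.star_dotProduct_self i
  simpa [hunit] using sq_mul_dotProduct_self_le_cfcAbs hA hB (hD.mulVec_eigenvectorBasis i)
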